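/- If X ~ ESBIII(c,k,ε) with c > 1, then E(X) = 2εk · B(1 - 1/c, 1/c + k). -/

import Mathlib

/-!
On each half-line the ESBIII density is half of the Burr III density
`c k y^(-c-1) (1 + y^(-c))^(-k-1)` rescaled by `1 + ε` (right) or `1 - ε` (left), so the mean is
`((1 + ε)² - (1 - ε)²) / 2 = 2ε` times the Burr III mean. The substitution `t = y^(-c)` turns
the Burr III mean into `k` times the beta-prime integral `∫ t^(-1/c) (1 + t)^(-k-1) dt`, and
`u = t / (1 + t)` turns that into the Beta integral `B(1 - 1/c, 1/c + k)`.
-/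

open Real

/-- sign function with sign(0) = 1, as in the paper. -/
noncomputable def sgn (x : ℝ) : ℝ := if x < 0 then -1 else 1

/-- ESBIII density. -/
noncomputable def esbiiiPdf (c k ε : ℝ) (x : ℝ) : ℝ :=
  (c * k / 2) * ((sgn x * x) / (1 + sgn x * ε)) ^ (-(c + 1)) *
    (1 + ((sgn x * x) / (1 + sgn x * ε)) ^ (-c)) ^ (-(k + 1))

open MeasureTheory Set ProbabilityTheory

section Beta

variable {a b : ℝ}

lemma ofReal_rpow_mul_one_sub_rpow {u : ℝ} (hu₀ : 0 ≤ u) (hu₁ : u ≤ 1) :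
    ((u ^ (a - 1) * (1 - u) ^ (b - 1) : ℝ) : ℂ) =
      (u : ℂ) ^ ((a : ℂ) - 1) * (1 - (u : ℂ)) ^ ((b : ℂ) - 1) := by
  push_cast [Complex.ofReal_cpow hu₀, Complex.ofReal_cpow (sub_nonneg.2 hu₁)]
  rfl

theorem integrableOn_Ioo_rpow_mul_one_sub_rpow (ha : 0 < a) (hb : 0 < b) :
    IntegrableOn (fun u : ℝ ↦ u ^ (a - 1) * (1 - u) ^ (b - 1)) (Ioo 0 1) := by
  have h := Complex.betaIntegral_convergent (u := a) (v := b) (by simpa) (by simpa)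
  rw [intervalIntegrable_iff_integrableOn_Ioo_of_le zero_le_one] at h
  refine IntegrableOn.congr_fun h.re (fun u hu ↦ ?_) measurableSet_Ioo
  simp [← ofReal_rpow_mul_one_sub_rpow hu.1.le hu.2.le]

theorem integral_Ioo_rpow_mul_one_sub_rpow (ha : 0 < a) (hb : 0 < b) :
    ∫ u in Ioo 0 1, u ^ (a - 1) * (1 - u) ^ (b - 1) = beta a b := by
  have h : Complex.betaIntegral a b =
      ((∫ u in (0 : ℝ)..1, u ^ (a - 1) * (1 - u) ^ (b - 1) : ℝ) : ℂ) := by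
    rw [Complex.betaIntegral, ← intervalIntegral.integral_ofReal]
    refine intervalIntegral.integral_congr fun u hu ↦ ?_
    rw [uIcc_of_le zero_le_one] at hu
    exact (ofReal_rpow_mul_one_sub_rpow hu.1 hu.2).symm
  rw [beta_eq_betaIntegralReal a b ha hb, h, Complex.ofReal_re,
    intervalIntegral.integral_of_le zero_le_one, integral_Ioc_eq_integral_Ioo]

lemma image_div_one_add_Ioi : (fun t : ℝ ↦ t / (1 + t)) '' Ioi 0 = Ioo 0 1 := by
  refine Subset.antisymm ?_ fun u ⟨hu₀, hu₁⟩ ↦ ⟨u / (1 - u), ?_, ?_⟩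
  · rintro _ ⟨t, ht : 0 < t, rfl⟩
    exact ⟨by positivity, (div_lt_one (by positivity)).2 (by linarith)⟩
  · exact div_pos hu₀ (by linarith)
  · have : 1 - u ≠ 0 := by linarith
    field_simp
    ring

lemma injOn_div_one_add_Ioi : InjOn (fun t : ℝ ↦ t / (1 + t)) (Ioi 0) := by
  intro s (hs : 0 < s) t (ht : 0 < t) hst
  rw [div_eq_div_iff (by positivity) (by positivity)] at hst
  linarith

lemma hasDerivAt_div_one_add {t : ℝ} (ht : 0 < t) :
    HasDerivAt (fun t : ℝ ↦ t / (1 + t)) ((1 + t) ^ (-2 : ℝ)) t := by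
  have h1t : 1 + t ≠ 0 := by positivity
  refine ((hasDerivAt_id t).div ((hasDerivAt_id t).const_add 1) h1t).congr_deriv ?_
  rw [rpow_neg (by positivity), rpow_two]
  simp only [id, one_mul, mul_one, add_sub_cancel_right, one_div]

lemma abs_deriv_smul_comp_div_one_add {t : ℝ} (ht : 0 < t) :
    |(1 + t) ^ (-2 : ℝ)| • ((t / (1 + t)) ^ (a - 1) * (1 - t / (1 + t)) ^ (b - 1)) =
      t ^ (a - 1) * (1 + t) ^ (-(a + b)) := by
  have h1t : 0 < 1 + t := by positivity
  have hsub : 1 - t / (1 + t) = (1 + t)⁻¹ := by field_simp; ring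
  have hexp : (1 + t) ^ (-(a + b)) =
      (1 + t) ^ (-2 : ℝ) * ((1 + t) ^ (a - 1))⁻¹ * ((1 + t) ^ (b - 1))⁻¹ := by
    rw [← rpow_neg h1t.le, ← rpow_neg h1t.le, ← rpow_add h1t, ← rpow_add h1t]
    ring_nf
  rw [hsub, abs_of_pos (rpow_pos_of_pos h1t _), smul_eq_mul, div_rpow ht.le h1t.le,
    inv_rpow h1t.le, hexp]
  ring

theorem integrableOn_Ioi_rpow_mul_one_add_rpow (ha : 0 < a) (hb : 0 < b) :
    IntegrableOn (fun t : ℝ ↦ t ^ (a - 1) * (1 + t) ^ (-(a + b))) (Ioi 0) := by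
  have h := integrableOn_Ioo_rpow_mul_one_sub_rpow ha hb
  rw [← image_div_one_add_Ioi, integrableOn_image_iff_integrableOn_abs_deriv_smul
    measurableSet_Ioi (fun t ht ↦ (hasDerivAt_div_one_add ht).hasDerivWithinAt)
    injOn_div_one_add_Ioi] at h
  exact h.congr_fun (fun t ht ↦ abs_deriv_smul_comp_div_one_add ht) measurableSet_Ioi

theorem integral_Ioi_rpow_mul_one_add_rpow (ha : 0 < a) (hb : 0 < b) :
    ∫ t in Ioi 0, t ^ (a - 1) * (1 + t) ^ (-(a + b)) = beta a b := by
  rw [← integral_Ioo_rpow_mul_one_sub_rpow ha hb, ← image_div_one_add_Ioi,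
    integral_image_eq_integral_abs_deriv_smul measurableSet_Ioi
      (fun t ht ↦ (hasDerivAt_div_one_add ht).hasDerivWithinAt) injOn_div_one_add_Ioi]
  exact setIntegral_congr_fun measurableSet_Ioi fun t ht ↦
    (abs_deriv_smul_comp_div_one_add ht).symm

end Beta

noncomputable def burrIIIPdf (c k y : ℝ) : ℝ :=
  c * k * y ^ (-(c + 1)) * (1 + y ^ (-c)) ^ (-(k + 1))

section BurrIII

variable {c k : ℝ}

lemma mul_burrIIIPdf_eq_smul_comp_rpow {y : ℝ} (hc : 0 < c) (hy : 0 < y) :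
    y * burrIIIPdf c k y = k * ((|-c| * y ^ (-c - 1)) •
      ((y ^ (-c)) ^ ((1 - 1 / c) - 1) * (1 + y ^ (-c)) ^ (-((1 - 1 / c) + (1 / c + k))))) := by
  have hyy : (y ^ (-c)) ^ ((1 - 1 / c) - 1) = y := by
    rw [← rpow_mul hy.le, show -c * ((1 - 1 / c) - 1) = 1 by field_simp; ring, rpow_one]
  rw [hyy, abs_neg, abs_of_pos hc, smul_eq_mul, burrIIIPdf, show -c - 1 = -(c + 1) by ring,
    show (1 - 1 / c) + (1 / c + k) = k + 1 by ring]
  ring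

theorem integrableOn_Ioi_mul_burrIIIPdf (hc : 1 < c) (hk : 0 < k) :
    IntegrableOn (fun y ↦ y * burrIIIPdf c k y) (Ioi 0) := by
  have hc₀ : 0 < c := by linarith
  have h := integrableOn_Ioi_rpow_mul_one_add_rpow (a := 1 - 1 / c) (b := 1 / c + k)
    (sub_pos.2 ((div_lt_one hc₀).2 hc)) (by positivity)
  rw [← integrableOn_Ioi_comp_rpow_iff _ (neg_ne_zero.2 hc₀.ne')] at h
  exact IntegrableOn.congr_fun (h.const_mul k)
    (fun y hy ↦ (mul_burrIIIPdf_eq_smul_comp_rpow hc₀ hy).symm) measurableSet_Ioi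

theorem integral_Ioi_mul_burrIIIPdf (hc : 1 < c) (hk : 0 < k) :
    ∫ y in Ioi 0, y * burrIIIPdf c k y = k * beta (1 - 1 / c) (1 / c + k) := by
  have hc₀ : 0 < c := by linarith
  rw [← integral_Ioi_rpow_mul_one_add_rpow (sub_pos.2 ((div_lt_one hc₀).2 hc)) (by positivity),
    ← integral_comp_rpow_Ioi
      (fun t ↦ t ^ ((1 - 1 / c) - 1) * (1 + t) ^ (-((1 - 1 / c) + (1 / c + k))))
      (neg_ne_zero.2 hc₀.ne'), ← integral_const_mul]
  exact setIntegral_congr_fun measurableSet_Ioi fun y hy ↦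
    mul_burrIIIPdf_eq_smul_comp_rpow hc₀ hy

end BurrIII

section Scaling

variable {d : ℝ} (g : ℝ → ℝ) (hd : 0 < d)
include hd

lemma mul_comp_div_eq (x : ℝ) : x * g (x / d) = d * ((d⁻¹ * x) * g (d⁻¹ * x)) := by
  rw [← mul_assoc, mul_inv_cancel_left₀ hd.ne', inv_mul_eq_div]

theorem integrableOn_Ioi_mul_comp_div (hg : IntegrableOn (fun y ↦ y * g y) (Ioi 0)) :
    IntegrableOn (fun x ↦ x * g (x / d)) (Ioi 0) := by
  have h := (integrableOn_Ioi_comp_mul_left_iff (fun y ↦ y * g y) 0 (inv_pos.2 hd)).2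
    (by simpa using hg)
  exact IntegrableOn.congr_fun (h.const_mul d) (fun x _ ↦ (mul_comp_div_eq g hd x).symm)
    measurableSet_Ioi

theorem integral_Ioi_mul_comp_div :
    ∫ x in Ioi 0, x * g (x / d) = d ^ 2 * ∫ y in Ioi 0, y * g y := by
  simp_rw [mul_comp_div_eq g hd]
  rw [integral_const_mul, integral_comp_mul_left_Ioi (fun y ↦ y * g y) 0 (inv_pos.2 hd),
    mul_zero, inv_inv, smul_eq_mul]
  ring

end Scaling

theorem integral_eq_integral_Ioi_add_integral_Ioi_comp_neg {f : ℝ → ℝ}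
    (hpos : IntegrableOn f (Ioi 0)) (hneg : IntegrableOn (fun x ↦ f (-x)) (Ioi 0)) :
    ∫ x, f x = (∫ x in Ioi 0, f x) + ∫ x in Ioi 0, f (-x) := by
  have hIic : IntegrableOn f (Iic 0) := by
    have h := (integrableOn_Ici_iff_integrableOn_Ioi (f := fun x ↦ f (-x)) (b := 0)).2 hneg
    simpa only [neg_neg] using
      IntegrableOn.comp_neg_Iic (c := (0 : ℝ)) (f := fun y ↦ f (-y)) (μ := volume)
        (by rwa [neg_zero])
  rw [← intervalIntegral.integral_Iic_add_Ioi hIic hpos, add_comm, integral_comp_neg_Ioi,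
    neg_zero]

section ESBIII

variable {c k ε x : ℝ}

lemma esbiiiPdf_of_nonneg (hx : 0 ≤ x) :
    esbiiiPdf c k ε x = burrIIIPdf c k (x / (1 + ε)) / 2 := by
  simp only [esbiiiPdf, sgn, if_neg hx.not_gt, one_mul, burrIIIPdf]
  ring

lemma esbiiiPdf_neg_of_pos (hx : 0 < x) :
    esbiiiPdf c k ε (-x) = burrIIIPdf c k (x / (1 - ε)) / 2 := by
  simp only [esbiiiPdf, sgn, if_pos (neg_lt_zero.2 hx), burrIIIPdf, neg_one_mul, neg_neg,
    ← sub_eq_add_neg]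
  ring

end ESBIII

/-- Expected value of the ESBIII distribution: E(X) = 2εk B(1-1/c, 1/c+k) for c > 1. -/
theorem esbiii_mean (c k ε : ℝ) (hc : 1 < c) (hk : 0 < k)
    (hε : ε ∈ Set.Ioo (-1 : ℝ) 1) :
    ∫ x : ℝ, x * esbiiiPdf c k ε x =
      2 * ε * k *
        (Real.Gamma (1 - 1 / c) * Real.Gamma (1 / c + k) /
          Real.Gamma ((1 - 1 / c) + (1 / c + k))) := by
  obtain ⟨hε₁, hε₂⟩ := hε
  have h₁ : 0 < 1 + ε := by linarith
  have h₂ : 0 < 1 - ε := by linarith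
  set g : ℝ → ℝ := fun y ↦ burrIIIPdf c k y / 2
  have hg : ∫ y in Ioi 0, y * g y = k * beta (1 - 1 / c) (1 / c + k) / 2 := by
    simp only [g, ← mul_div_assoc, integral_div, integral_Ioi_mul_burrIIIPdf hc hk]
  have hg_int : IntegrableOn (fun y ↦ y * g y) (Ioi 0) :=
    IntegrableOn.congr_fun (Integrable.div_const (integrableOn_Ioi_mul_burrIIIPdf hc hk) 2)
      (fun y _ ↦ mul_div_assoc _ _ _) measurableSet_Ioi
  have hright : EqOn (fun x ↦ x * esbiiiPdf c k ε x) (fun x ↦ x * g (x / (1 + ε))) (Ioi 0) :=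
    fun x hx ↦ by simp only [g, esbiiiPdf_of_nonneg (le_of_lt hx)]
  have hleft : EqOn (fun x ↦ -x * esbiiiPdf c k ε (-x)) (fun x ↦ -(x * g (x / (1 - ε))))
      (Ioi 0) :=
    fun x hx ↦ by simp only [g, esbiiiPdf_neg_of_pos hx, neg_mul]
  rw [integral_eq_integral_Ioi_add_integral_Ioi_comp_neg
      ((integrableOn_Ioi_mul_comp_div g h₁ hg_int).congr_fun hright.symm measurableSet_Ioi)
      ((integrableOn_Ioi_mul_comp_div g h₂ hg_int).neg.congr_fun hleft.symm measurableSet_Ioi),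
    setIntegral_congr_fun measurableSet_Ioi hright, setIntegral_congr_fun measurableSet_Ioi hleft,
    integral_neg, integral_Ioi_mul_comp_div g h₁, integral_Ioi_mul_comp_div g h₂, hg, beta]
  ring
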